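/- Assume Y = K acts on itself by the regular representation, H ≤ Perm(X) is transitive, and the normalizer of H in Perm(X) is the internal semidirect product M ⋉ H for a subgroup M of Perm(X). Then the normalizer N of W = H ≀ K in Perm(Z) is the internal semidirect product (M* · Γ(Aut(K))) ⋉ W: that is, N = M* · Γ(Aut(K)) · W, W is normal in N, and (M* · Γ(Aut(K))) ∩ W = 1; moreover Γ(Aut(K)) ∩ M* = 1, M* centralizes Λ(K), and M* centralizes Γ(Aut(K)), so that M* · Γ(Aut(K)) is isomorphic to M × Aut(K). -/

import Mathlib

open Equiv

/-- The block `X_y = X × {y}` inside `Z = X × Y`. -/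
def block (X Y : Type*) (y : Y) : Set (X × Y) := {p | p.2 = y}

/-- The subgroup `S_Y(Z)` of all permutations of `Z = X × Y` stabilizing every block `X_y`. -/
def blockStab (X Y : Type*) : Subgroup (Perm (X × Y)) where
  carrier := {f | ∀ y : Y, f '' block X Y y = block X Y y}
  one_mem' := by intro y; simp
  mul_mem' := by
    intro f g hf hg y
    have hfg : ⇑(f * g) = ⇑f ∘ ⇑g := rfl
    rw [hfg, Set.image_comp, hg y, hf y]
  inv_mem' := by
    intro f hf y
    have h1 : ⇑f '' block X Y y = block X Y y := hf y
    calc ⇑f⁻¹ '' block X Y y = ⇑f⁻¹ '' (⇑f '' block X Y y) := by rw [h1]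
      _ = block X Y y := by
          rw [← Set.image_comp]
          have h2 : ⇑f⁻¹ ∘ ⇑f = id := by funext p; simp
          rw [h2, Set.image_id]

/-- For `h` a permutation of `X` and `y ∈ Y`, the permutation `h_y` of `Z = X × Y`
acting as `h` on the block `X_y` and fixing everything else. -/
noncomputable def fiberPerm (X Y : Type*) (h : Perm X) (y : Y) : Perm (X × Y) :=
  letI := Classical.decEq Y
  { toFun := fun p => if p.2 = y then (h p.1, p.2) else p
    invFun := fun p => if p.2 = y then (h.symm p.1, p.2) else p
    left_inv := fun p => by
      obtain ⟨x, y'⟩ := p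
      by_cases hp : y' = y <;> simp [hp]
    right_inv := fun p => by
      obtain ⟨x, y'⟩ := p
      by_cases hp : y' = y <;> simp [hp] }

lemma fiberPerm_apply_eq (X Y : Type*) (h : Perm X) (y : Y) (x : X) :
    fiberPerm X Y h y (x, y) = (h x, y) := by
  simp [fiberPerm]

lemma fiberPerm_apply_ne (X Y : Type*) (h : Perm X) (y : Y) (p : X × Y) (hp : p.2 ≠ y) :
    fiberPerm X Y h y p = p := by
  simp [fiberPerm, hp]

/-- The homomorphism `h ↦ h_y`. -/
noncomputable def fiberHom (X Y : Type*) (y : Y) : Perm X →* Perm (X × Y) where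
  toFun h := fiberPerm X Y h y
  map_one' := by
    refine Equiv.ext fun p => ?_
    by_cases hp : p.2 = y
    · obtain ⟨x, y'⟩ := p; subst hp; simp [fiberPerm_apply_eq]
    · simp [fiberPerm_apply_ne _ _ _ _ _ hp]
  map_mul' := by
    intro h1 h2
    refine Equiv.ext fun p => ?_
    by_cases hp : p.2 = y
    · obtain ⟨x, y'⟩ := p
      subst hp
      simp [Perm.mul_apply, fiberPerm_apply_eq]
    · simp [Perm.mul_apply, fiberPerm_apply_ne _ _ _ _ _ hp]

/-- The embedding `Λ` of permutations of `Y` into permutations of `Z = X × Y`,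
`Λ(k)(x,y) = (x, k(y))`. -/
def lamHom (X Y : Type*) : Perm Y →* Perm (X × Y) where
  toFun k := (Equiv.refl X).prodCongr k
  map_one' := Equiv.ext fun p => rfl
  map_mul' := fun k1 k2 => Equiv.ext fun p => rfl

lemma lamHom_apply (X Y : Type*) (k : Perm Y) (x : X) (y : Y) :
    lamHom X Y k (x, y) = (x, k y) := rfl

/-- The base group `B` of the wreath product: all permutations of `Z = X × Y`
stabilizing each block `X_y` and restricting to an element of `H_y` on it. -/
def baseGroup (X Y : Type*) (H : Subgroup (Perm X)) : Subgroup (Perm (X × Y)) where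
  carrier := {f | ∀ y : Y, ∃ h ∈ H, ∀ x : X, f (x, y) = (h x, y)}
  one_mem' := fun y => ⟨1, H.one_mem, fun x => rfl⟩
  mul_mem' := by
    rintro f g hf hg y
    obtain ⟨hg', hgH, hgeq⟩ := hg y
    obtain ⟨hf', hfH, hfeq⟩ := hf y
    refine ⟨hf' * hg', H.mul_mem hfH hgH, fun x => ?_⟩
    have : (f * g) (x, y) = f (g (x, y)) := rfl
    rw [this, hgeq x, hfeq (hg' x)]
    rfl
  inv_mem' := by
    rintro f hf y
    obtain ⟨h, hH, heq⟩ := hf y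
    refine ⟨h⁻¹, H.inv_mem hH, fun x => ?_⟩
    have h1 : f ((h⁻¹ : Perm X) x, y) = (x, y) := by
      rw [heq]
      simp
    calc f⁻¹ (x, y) = f⁻¹ (f ((h⁻¹ : Perm X) x, y)) := by rw [h1]
      _ = ((h⁻¹ : Perm X) x, y) := by simp

lemma mem_baseGroup_iff (X Y : Type*) (H : Subgroup (Perm X)) (f : Perm (X × Y)) :
    f ∈ baseGroup X Y H ↔ ∀ y : Y, ∃ h ∈ H, ∀ x : X, f (x, y) = (h x, y) := Iff.rfl

lemma lam_conj_base (X Y : Type*) {H : Subgroup (Perm X)} (k : Perm Y) {b : Perm (X × Y)}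
    (hb : b ∈ baseGroup X Y H) : (lamHom X Y k)⁻¹ * b * lamHom X Y k ∈ baseGroup X Y H := by
  intro y
  obtain ⟨h, hH, heq⟩ := hb (k y)
  refine ⟨h, hH, fun x => ?_⟩
  have h2 : ((lamHom X Y k)⁻¹ : Perm (X × Y)) (h x, k y) = (h x, y) := by
    have h3 : (lamHom X Y k) (h x, y) = (h x, k y) := rfl
    rw [← h3]
    simp
  calc ((lamHom X Y k)⁻¹ * b * lamHom X Y k) (x, y)
      = (lamHom X Y k)⁻¹ (b ((lamHom X Y k) (x, y))) := rfl
    _ = (lamHom X Y k)⁻¹ (b (x, k y)) := rfl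
    _ = (lamHom X Y k)⁻¹ (h x, k y) := by rw [heq x]
    _ = (h x, y) := h2

/-- The unrestricted wreath product `W = H ≀ K ≤ Perm(X × Y)`, namely the
internal product `Λ(K)·B`. -/
def wreath (X Y : Type*) (H : Subgroup (Perm X)) (K : Subgroup (Perm Y)) :
    Subgroup (Perm (X × Y)) where
  carrier := {w | ∃ k ∈ K, ∃ b ∈ baseGroup X Y H, w = lamHom X Y k * b}
  one_mem' := ⟨1, K.one_mem, 1, (baseGroup X Y H).one_mem, by simp⟩
  mul_mem' := by
    rintro w1 w2 ⟨k1, hk1, b1, hb1, rfl⟩ ⟨k2, hk2, b2, hb2, rfl⟩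
    refine ⟨k1 * k2, K.mul_mem hk1 hk2, ((lamHom X Y k2)⁻¹ * b1 * lamHom X Y k2) * b2,
      (baseGroup X Y H).mul_mem (lam_conj_base X Y k2 hb1) hb2, ?_⟩
    rw [map_mul]
    group
  inv_mem' := by
    rintro w ⟨k, hk, b, hb, rfl⟩
    refine ⟨k⁻¹, K.inv_mem hk, (lamHom X Y k⁻¹)⁻¹ * b⁻¹ * lamHom X Y k⁻¹,
      lam_conj_base X Y k⁻¹ ((baseGroup X Y H).inv_mem hb), ?_⟩
    rw [map_inv]
    group

lemma mem_wreath_iff (X Y : Type*) (H : Subgroup (Perm X)) (K : Subgroup (Perm Y))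
    (w : Perm (X × Y)) :
    w ∈ wreath X Y H K ↔ ∃ k ∈ K, ∃ b ∈ baseGroup X Y H, w = lamHom X Y k * b := Iff.rfl

/-- The image of the (right) regular representation of a group `K` in `Perm K`. -/
def rightRegular (K : Type*) [Group K] : Subgroup (Perm K) where
  carrier := Set.range (fun k : K => Equiv.mulRight k)
  one_mem' := ⟨1, by ext x; simp⟩
  mul_mem' := by
    rintro _ _ ⟨a, rfl⟩ ⟨b, rfl⟩
    exact ⟨b * a, by ext x; simp [mul_assoc]⟩
  inv_mem' := by
    rintro _ ⟨a, rfl⟩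
    exact ⟨a⁻¹, by ext x; simp⟩

/-- The homomorphism `Γ : Aut(K) → Perm(X × K)`, `Γ(γ)(x,k) = (x, γ(k))`. -/
def gammaHom (X K : Type*) [Group K] : MulAut K →* Perm (X × K) where
  toFun γ := (Equiv.refl X).prodCongr γ.toEquiv
  map_one' := Equiv.ext fun p => rfl
  map_mul' := fun γ1 γ2 => Equiv.ext fun p => rfl

lemma gammaHom_apply (X K : Type*) [Group K] (γ : MulAut K) (x : X) (k : K) :
    gammaHom X K γ (x, k) = (x, γ k) := rfl

/-- The homomorphism `m ↦ m*` from `Perm X` to `Perm (X × K)`, `m*(x,k) = (m(x), k)`. -/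
def mstarHom (X K : Type*) : Perm X →* Perm (X × K) where
  toFun m := m.prodCongr (Equiv.refl K)
  map_one' := Equiv.ext fun p => rfl
  map_mul' := fun m1 m2 => Equiv.ext fun p => rfl

lemma mstarHom_apply (X K : Type*) (m : Perm X) (x : X) (k : K) :
    mstarHom X K m (x, k) = (m x, k) := rfl

/-!
An element `α` of the normalizer of `W = H ≀ K` permutes the blocks `X_k`: for `h ∈ H` and
`k' ≠ k`, the element `α h_k α⁻¹ ∈ W` fixes `α (x, k')`, so it lies in the base group and preserves
blocks; as `H` is transitive, this puts all of `α (X_k)` into one block. After a translation `Λ(c)`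
we may assume that `α` maps `X_1` to itself; conjugation by `α` then carries translations to
translations, so the induced permutation of `K` is an automorphism `γ`. Now `Γ(γ)⁻¹ α` fixes every
block, its restriction to `X_1` normalizes `H` and hence equals `m h` with `m ∈ M`, and comparing
the other blocks with `X_1` through translations gives `m*⁻¹ Γ(γ)⁻¹ α ∈ B`. The rest of the
statement is read off from `m* Γ(γ) (x, k) = (m x, γ k)`.
-/

open Subgroup

section Wreath

variable {X Y : Type*} {H : Subgroup (Perm X)} {K : Subgroup (Perm Y)}

lemma snd_apply_of_mem_baseGroup {b : Perm (X × Y)} (hb : b ∈ baseGroup X Y H) (p : X × Y) :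
    (b p).2 = p.2 := by
  obtain ⟨h, -, hbh⟩ := hb p.2
  rw [hbh]

lemma fiberPerm_mem_baseGroup {h : Perm X} (hh : h ∈ H) (y : Y) :
    fiberPerm X Y h y ∈ baseGroup X Y H := by
  intro y'
  by_cases hy : y' = y
  · subst hy
    exact ⟨h, hh, fiberPerm_apply_eq X Y h y'⟩
  · exact ⟨1, H.one_mem, fun x => fiberPerm_apply_ne X Y h y (x, y') hy⟩

lemma baseGroup_le_wreath : baseGroup X Y H ≤ wreath X Y H K :=
  fun b hb => ⟨1, K.one_mem, b, hb, by rw [map_one, one_mul]⟩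

lemma lamHom_mem_wreath {κ : Perm Y} (hκ : κ ∈ K) : lamHom X Y κ ∈ wreath X Y H K :=
  ⟨κ, hκ, 1, (baseGroup X Y H).one_mem, (mul_one _).symm⟩

lemma lamHom_inv_apply (κ : Perm Y) (x : X) (y : Y) :
    (lamHom X Y κ)⁻¹ (x, y) = (x, κ⁻¹ y) := by
  rw [← map_inv]
  rfl

lemma commute_mstarHom_lamHom (m : Perm X) (κ : Perm Y) :
    Commute (mstarHom X Y m) (lamHom X Y κ) :=
  Equiv.ext fun _ => rfl

lemma map_lamHom_normalizer_le :
    (normalizer (K : Set (Perm Y))).map (lamHom X Y) ≤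
      normalizer (wreath X Y H K : Set (Perm (X × Y))) := by
  rw [le_normalizer_iff]
  rintro _ ⟨π, hπ, rfl⟩ _ ⟨κ, hκ, b, hb, rfl⟩
  refine ⟨π * κ * π⁻¹, (mem_normalizer_iff.mp hπ κ).mp hκ,
    (lamHom X Y π⁻¹)⁻¹ * b * lamHom X Y π⁻¹, lam_conj_base X Y π⁻¹ hb, ?_⟩
  simp only [map_mul, map_inv]
  group

lemma map_mstarHom_normalizer_le :
    (normalizer (H : Set (Perm X))).map (mstarHom X Y) ≤
      normalizer (wreath X Y H K : Set (Perm (X × Y))) := by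
  rw [le_normalizer_iff]
  rintro _ ⟨m, hm, rfl⟩ _ ⟨κ, hκ, b, hb, rfl⟩
  have hconj : mstarHom X Y m * b * (mstarHom X Y m)⁻¹ ∈ baseGroup X Y H := by
    intro y
    obtain ⟨h, hh, hbh⟩ := hb y
    refine ⟨m * h * m⁻¹, (mem_normalizer_iff.mp hm h).mp hh, fun x => ?_⟩
    simp [← map_inv, Perm.mul_apply, mstarHom_apply, hbh]
  refine ⟨κ, hκ, _, hconj, ?_⟩
  rw [← mul_assoc, (commute_mstarHom_lamHom m κ).eq]
  group

def blockPerm (α : Perm (X × Y)) (hα : ∀ p, (α p).2 = p.2) (y : Y) : Perm X where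
  toFun x := (α (x, y)).1
  invFun x := (α⁻¹ (x, y)).1
  left_inv x := by
    have : ((α (x, y)).1, y) = α (x, y) := Prod.ext rfl (hα (x, y)).symm
    simp [this]
  right_inv x := by
    have : ((α⁻¹ (x, y)).1, y) = α⁻¹ (x, y) :=
      Prod.ext rfl (by simpa using hα (α⁻¹ (x, y)))
    change (α ((α⁻¹ (x, y)).1, y)).1 = x
    rw [this]
    simp

lemma apply_eq_blockPerm (α : Perm (X × Y)) (hα : ∀ p, (α p).2 = p.2) (x : X) (y : Y) :
    α (x, y) = (blockPerm α hα y x, y) :=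
  Prod.ext rfl (hα _)

end Wreath

section Regular

variable {X K : Type*} [Group K] {H : Subgroup (Perm X)}

lemma exists_snd_apply_eq_mul_of_mem_wreath {w : Perm (X × K)}
    (hw : w ∈ wreath X K H (rightRegular K)) : ∃ k : K, ∀ p, (w p).2 = p.2 * k := by
  obtain ⟨_, ⟨k, rfl⟩, b, hb, rfl⟩ := hw
  exact ⟨k, fun p => by
    rw [Perm.mul_apply, ← Prod.mk.eta (p := b p), lamHom_apply, snd_apply_of_mem_baseGroup hb]
    rfl⟩

lemma mem_baseGroup_of_mem_wreath {w : Perm (X × K)} (hw : w ∈ wreath X K H (rightRegular K))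
    (p : X × K) (hp : (w p).2 = p.2) : w ∈ baseGroup X K H := by
  obtain ⟨_, ⟨k, rfl⟩, b, hb, rfl⟩ := hw
  have hk : k = 1 := by
    rw [Perm.mul_apply, ← Prod.mk.eta (p := b p), lamHom_apply, snd_apply_of_mem_baseGroup hb] at hp
    simpa using hp
  simpa [hk] using hb

lemma range_toPerm_le_normalizer_rightRegular :
    (MulAut.toPerm K).range ≤ normalizer (rightRegular K : Set (Perm K)) := by
  rw [le_normalizer_iff]
  rintro _ ⟨γ, rfl⟩ _ ⟨k, rfl⟩
  refine ⟨γ k, Equiv.ext fun j => ?_⟩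
  show j * γ k = γ (γ.symm j * k)
  rw [map_mul, MulEquiv.apply_symm_apply]

lemma range_gammaHom_le_normalizer :
    (gammaHom X K).range ≤ normalizer (wreath X K H (rightRegular K) : Set (Perm (X × K))) := by
  have hΓ : gammaHom X K = (lamHom X K).comp (MulAut.toPerm K) := rfl
  rw [hΓ, MonoidHom.range_comp]
  exact (map_mono range_toPerm_le_normalizer_rightRegular).trans map_lamHom_normalizer_le

lemma commute_mstarHom_gammaHom (m : Perm X) (γ : MulAut K) :
    Commute (mstarHom X K m) (gammaHom X K γ) :=
  Equiv.ext fun _ => rfl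

lemma mstarHom_mul_gammaHom_apply (m : Perm X) (γ : MulAut K) (x : X) (j : K) :
    (mstarHom X K m * gammaHom X K γ) (x, j) = (m x, γ j) :=
  rfl

lemma eq_one_of_mstarHom_eq_gammaHom {m : Perm X} {γ : MulAut K}
    (h : mstarHom X K m = gammaHom X K γ) : m = 1 :=
  Equiv.ext fun x => congrArg Prod.fst (Equiv.ext_iff.mp h (x, 1))

end Regular

section Normalizer

variable {X K : Type*} [Group K] {H : Subgroup (Perm X)} {α : Perm (X × K)}

lemma snd_apply_eq_of_mem_normalizer (hH : ∀ x x' : X, ∃ h ∈ H, h x = x')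
    (hα : α ∈ normalizer (wreath X K H (rightRegular K) : Set (Perm (X × K))))
    {p q : X × K} (hpq : p.2 = q.2) : (α p).2 = (α q).2 := by
  obtain ⟨x, k⟩ := p
  obtain ⟨x', _⟩ := q
  subst hpq
  rcases subsingleton_or_nontrivial K with hK | hK
  · exact Subsingleton.elim _ _
  obtain ⟨k₁, hk₁⟩ := exists_ne k
  obtain ⟨h, hh, rfl⟩ := hH x x'
  have hw : α * fiberPerm X K h k * α⁻¹ ∈ wreath X K H (rightRegular K) :=
    (mem_normalizer_iff.mp hα _).mp (baseGroup_le_wreath (fiberPerm_mem_baseGroup hh k))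
  have hfix : (α * fiberPerm X K h k * α⁻¹) (α (x, k₁)) = α (x, k₁) := by
    simp [Perm.mul_apply, fiberPerm_apply_ne X K h k (x, k₁) hk₁]
  have hb := mem_baseGroup_of_mem_wreath hw _ (congrArg Prod.snd hfix)
  have hmove : (α * fiberPerm X K h k * α⁻¹) (α (x, k)) = α (h x, k) := by
    simp [Perm.mul_apply, fiberPerm_apply_eq]
  rw [← hmove, snd_apply_of_mem_baseGroup hb]

lemma exists_mulAut_snd_apply_eq (hH : ∀ x x' : X, ∃ h ∈ H, h x = x')
    (hα : α ∈ normalizer (wreath X K H (rightRegular K) : Set (Perm (X × K))))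
    (x₀ : X) (hα₁ : (α (x₀, 1)).2 = 1) : ∃ γ : MulAut K, ∀ p, (α p).2 = γ p.2 := by
  let σ : K → K := fun j => (α (x₀, j)).2
  have hσ : ∀ p, (α p).2 = σ p.2 := fun p => snd_apply_eq_of_mem_normalizer hH hα rfl
  -- `α Λ(k) α⁻¹ ∈ W` translates all blocks by one and the same `k'`, which is `σ k`
  have hmul : ∀ j k, σ (j * k) = σ j * σ k := by
    intro j k
    obtain ⟨k', hk'⟩ := exists_snd_apply_eq_mul_of_mem_wreath
      ((mem_normalizer_iff.mp hα _).mp (lamHom_mem_wreath (X := X) (H := H) ⟨k, rfl⟩))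
    have hshift : ∀ i, σ (i * k) = σ i * k' := fun i => by
      simpa [Perm.mul_apply, lamHom_apply, hσ] using hk' (α (x₀, i))
    have hk : σ k = k' := by simpa [show σ 1 = 1 from hα₁] using hshift 1
    rw [hshift, hk]
  have hinj : Function.Injective σ := fun j j' hjj' => by
    simpa using snd_apply_eq_of_mem_normalizer hH (inv_mem hα)
      ((hσ (x₀, j)).trans (hjj'.trans (hσ (x₀, j')).symm))
  have hsurj : Function.Surjective σ := fun s =>
    ⟨(α⁻¹ (x₀, s)).2, by simpa using (hσ (α⁻¹ (x₀, s))).symm⟩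
  exact ⟨MulEquiv.ofBijective (MonoidHom.mk' σ hmul) ⟨hinj, hsurj⟩, hσ⟩

variable [Nonempty X]

lemma conj_mem_of_apply_eq
    (hα : α ∈ normalizer (wreath X K H (rightRegular K) : Set (Perm (X × K))))
    {e : Perm X} {j j' : K} (he : ∀ x, α (x, j) = (e x, j')) {h : Perm X} (hh : h ∈ H) :
    e * h * e⁻¹ ∈ H := by
  have hw : α * fiberPerm X K h j * α⁻¹ ∈ wreath X K H (rightRegular K) :=
    (mem_normalizer_iff.mp hα _).mp (baseGroup_le_wreath (fiberPerm_mem_baseGroup hh j))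
  have happly : ∀ x, (α * fiberPerm X K h j * α⁻¹) (e x, j') = (e (h x), j') := fun x => by
    rw [Perm.mul_apply, Perm.mul_apply, ← he x, ← he (h x)]
    simp [fiberPerm_apply_eq]
  let x₀ := Classical.arbitrary X
  obtain ⟨h', hh', hh'e⟩ :=
    mem_baseGroup_of_mem_wreath hw (e x₀, j') (by rw [happly]) j'
  have heh' : e * h * e⁻¹ = h' := Equiv.ext fun x => by
    have hx := (happly (e⁻¹ x)).symm.trans (hh'e (e (e⁻¹ x)))
    simpa [Perm.mul_apply] using congrArg Prod.fst hx
  rwa [heh']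

lemma mem_normalizer_of_apply_eq
    (hα : α ∈ normalizer (wreath X K H (rightRegular K) : Set (Perm (X × K))))
    {e : Perm X} {j j' : K} (he : ∀ x, α (x, j) = (e x, j')) :
    e ∈ normalizer (H : Set (Perm X)) := by
  have he' : ∀ x, α⁻¹ (x, j') = (e⁻¹ x, j) := fun x => by
    rw [Perm.inv_eq_iff_eq, he]
    simp
  refine mem_normalizer_iff.mpr fun h => ⟨conj_mem_of_apply_eq hα he, fun hh => ?_⟩
  simpa [mul_assoc] using conj_mem_of_apply_eq (inv_mem hα) he' hh

lemma exists_mstarHom_inv_mul_mem_baseGroup {M : Subgroup (Perm X)}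
    (hM : ∀ g ∈ normalizer (H : Set (Perm X)), ∃ m ∈ M, ∃ h ∈ H, g = m * h)
    (hα : α ∈ normalizer (wreath X K H (rightRegular K) : Set (Perm (X × K))))
    (hblock : ∀ p, (α p).2 = p.2) : ∃ m ∈ M, (mstarHom X K m)⁻¹ * α ∈ baseGroup X K H := by
  have he := apply_eq_blockPerm α hblock (y := 1)
  obtain ⟨m, hm, h₁, hh₁, hmh₁⟩ := hM _ (mem_normalizer_of_apply_eq hα he)
  refine ⟨m, hm, fun j => ?_⟩
  -- `w` carries block `1` through block `j` and back, so it lies in the base group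
  let w := α⁻¹ * (lamHom X K (Equiv.mulRight j))⁻¹ * α * lamHom X K (Equiv.mulRight j)
  have hΛ : lamHom X K (Equiv.mulRight j) ∈ wreath X K H (rightRegular K) :=
    lamHom_mem_wreath ⟨j, rfl⟩
  have hw : w ∈ wreath X K H (rightRegular K) :=
    mul_mem ((mem_normalizer_iff''.mp hα _).mp (inv_mem hΛ)) hΛ
  have hinv : ∀ q, (α⁻¹ q).2 = q.2 := fun q => by simpa using (hblock (α⁻¹ q)).symm
  let x₀ := Classical.arbitrary X
  have hsnd : (w (x₀, 1)).2 = 1 := by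
    simp only [w, Perm.mul_apply]
    rw [hinv, lamHom_apply, apply_eq_blockPerm α hblock, lamHom_inv_apply]
    simp
  obtain ⟨h', hh', hwh'⟩ := mem_baseGroup_of_mem_wreath hw (x₀, 1) hsnd 1
  refine ⟨h₁ * h', mul_mem hh₁ hh', fun x => ?_⟩
  have hαj : α (x, j) = lamHom X K (Equiv.mulRight j) (α (h' x, 1)) := by
    rw [← hwh' x]
    simp [w, Perm.mul_apply, lamHom_apply]
  rw [Perm.mul_apply, hαj, he, ← map_inv, mstarHom_apply, lamHom_apply, hmh₁]
  simp [Perm.mul_apply]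

lemma exists_eq_mstarHom_mul_gammaHom_mul {M : Subgroup (Perm X)}
    (hH : ∀ x x' : X, ∃ h ∈ H, h x = x')
    (hM : ∀ g ∈ normalizer (H : Set (Perm X)), ∃ m ∈ M, ∃ h ∈ H, g = m * h)
    (hα : α ∈ normalizer (wreath X K H (rightRegular K) : Set (Perm (X × K)))) :
    ∃ m ∈ M, ∃ γ : MulAut K, ∃ w ∈ wreath X K H (rightRegular K),
      α = mstarHom X K m * gammaHom X K γ * w := by
  let x₀ := Classical.arbitrary X
  let Λc := lamHom X K (Equiv.mulRight (α (x₀, 1)).2)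
  have hΛc : Λc ∈ wreath X K H (rightRegular K) := lamHom_mem_wreath ⟨_, rfl⟩
  have hβ : Λc⁻¹ * α ∈ normalizer (wreath X K H (rightRegular K) : Set (Perm (X × K))) :=
    mul_mem (le_normalizer (inv_mem hΛc)) hα
  obtain ⟨γ, hγ⟩ := exists_mulAut_snd_apply_eq hH hβ x₀ (by
    rw [Perm.mul_apply, ← Prod.mk.eta (p := α (x₀, 1)), lamHom_inv_apply]
    simp)
  have hβ' : (gammaHom X K γ)⁻¹ * (Λc⁻¹ * α) ∈
      normalizer (wreath X K H (rightRegular K) : Set (Perm (X × K))) :=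
    mul_mem (inv_mem (range_gammaHom_le_normalizer ⟨γ, rfl⟩)) hβ
  obtain ⟨m, hm, hb⟩ := exists_mstarHom_inv_mul_mem_baseGroup hM hβ' fun p => by
    rw [Perm.mul_apply, ← Prod.mk.eta (p := (Λc⁻¹ * α) p), hγ, ← map_inv, gammaHom_apply]
    simp
  refine ⟨m, hm, γ, (gammaHom X K γ * mstarHom X K m)⁻¹ * α, ?_, ?_⟩
  · have hw : (gammaHom X K γ * mstarHom X K m)⁻¹ * α =
        (mstarHom X K m)⁻¹ * ((gammaHom X K γ)⁻¹ * (Λc⁻¹ * α)) * (α⁻¹ * Λc * α) := by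
      group
    rw [hw]
    exact mul_mem (baseGroup_le_wreath hb) ((mem_normalizer_iff''.mp hα _).mp hΛc)
  · rw [(commute_mstarHom_gammaHom m γ).eq]
    group

lemma mem_and_eq_one_of_mstarHom_mul_gammaHom_mem_wreath {m : Perm X}
    {γ : MulAut K} (hmγ : mstarHom X K m * gammaHom X K γ ∈ wreath X K H (rightRegular K)) :
    m ∈ H ∧ γ = 1 := by
  let x₀ := Classical.arbitrary X
  have hb := mem_baseGroup_of_mem_wreath hmγ (x₀, 1) (by simp [mstarHom_mul_gammaHom_apply])
  constructor
  · obtain ⟨h, hh, hbh⟩ := hb 1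
    have hmh : m = h := Equiv.ext fun x => by
      simpa [mstarHom_mul_gammaHom_apply] using congrArg Prod.fst (hbh x)
    exact hmh ▸ hh
  · ext j
    obtain ⟨h, -, hbh⟩ := hb j
    simpa [mstarHom_mul_gammaHom_apply] using congrArg Prod.snd (hbh x₀)

lemma nonempty_mulEquiv_map_mstarHom_sup_range_gammaHom (M : Subgroup (Perm X)) :
    Nonempty (↥(M.map (mstarHom X K) ⊔ (gammaHom X K).range) ≃* M × MulAut K) := by
  let f := (mstarHom X K).comp M.subtype
  have hcomm : ∀ m γ, Commute (f m) (gammaHom X K γ) := fun m γ =>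
    commute_mstarHom_gammaHom (m : Perm X) γ
  have hinj : Function.Injective (f.noncommCoprod (gammaHom X K) hcomm) := by
    rw [injective_iff_map_eq_one]
    rintro ⟨m, γ⟩ h
    have hfix : ∀ x j, ((m : Perm X) x, γ j) = (x, j) := fun x j => Equiv.ext_iff.mp h (x, j)
    exact Prod.ext (Subtype.ext (Equiv.ext fun x => congrArg Prod.fst (hfix x 1)))
      (MulEquiv.ext fun j => congrArg Prod.snd (hfix (Classical.arbitrary X) j))
  have hrange : (f.noncommCoprod (gammaHom X K) hcomm).range =
      M.map (mstarHom X K) ⊔ (gammaHom X K).range := by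
    rw [MonoidHom.noncommCoprod_range, MonoidHom.range_comp, M.range_subtype]
  exact ⟨((MonoidHom.ofInjective hinj).trans (MulEquiv.subgroupCongr hrange)).symm⟩

end Normalizer

/-- **Lemma G.** Assume `Y = K` regular, `H ≤ Perm X` transitive, and
`N_{Perm X}(H) = M ⋉ H`. Then the normalizer `N` of `W = H ≀ K` in `Perm Z` is the
internal semidirect product `(M*·Γ(Aut K)) ⋉ W`, with `Γ(Aut K) ∩ M* = 1`,
`[M*, Λ(K)] = 1` and `[M*, Γ(Aut K)] = 1`, so that `M*·Γ(Aut K) ≅ M × Aut(K)`. -/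
theorem normalizer_wreath_semidirect {X : Type*} [Nonempty X] (K : Type*) [Group K]
    (H M : Subgroup (Perm X))
    (hH : ∀ x x' : X, ∃ h ∈ H, h x = x')
    (hNH : ∀ g : Perm X, g ∈ Subgroup.normalizer (H : Set (Perm X)) ↔ ∃ m ∈ M, ∃ h ∈ H, g = m * h)
    (hMH : M ⊓ H = ⊥) :
    (∀ α : Perm (X × K), α ∈ Subgroup.normalizer (wreath X K H (rightRegular K) : Set (Perm (X × K))) ↔
        ∃ m ∈ M, ∃ γ : MulAut K, ∃ w ∈ wreath X K H (rightRegular K),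
          α = mstarHom X K m * gammaHom X K γ * w) ∧
    (∀ α ∈ Subgroup.normalizer (wreath X K H (rightRegular K) : Set (Perm (X × K))),
      ∀ w ∈ wreath X K H (rightRegular K), α⁻¹ * w * α ∈ wreath X K H (rightRegular K)) ∧
    (∀ m ∈ M, ∀ γ : MulAut K,
      mstarHom X K m * gammaHom X K γ ∈ wreath X K H (rightRegular K) →
        mstarHom X K m * gammaHom X K γ = 1) ∧
    (∀ m ∈ M, ∀ γ : MulAut K, mstarHom X K m = gammaHom X K γ → mstarHom X K m = 1) ∧
    (∀ m ∈ M, ∀ k : K, Commute (mstarHom X K m) (lamHom X K (Equiv.mulRight k))) ∧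
    (∀ m ∈ M, ∀ γ : MulAut K, Commute (mstarHom X K m) (gammaHom X K γ)) ∧
    Nonempty (↥(Subgroup.map (mstarHom X K) M ⊔ (gammaHom X K).range) ≃* M × MulAut K) := by
  have hM_le : M ≤ normalizer (H : Set (Perm X)) := fun m hm =>
    (hNH m).mpr ⟨m, hm, 1, H.one_mem, (mul_one m).symm⟩
  refine ⟨fun α => ⟨exists_eq_mstarHom_mul_gammaHom_mul hH fun g => (hNH g).mp, ?_⟩,
    fun α hα w hw => (mem_normalizer_iff''.mp hα w).mp hw, fun m hm γ hmγ => ?_,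
    fun m _ γ h => by rw [eq_one_of_mstarHom_eq_gammaHom h, map_one],
    fun m _ k => commute_mstarHom_lamHom m _, fun m _ γ => commute_mstarHom_gammaHom m γ,
    nonempty_mulEquiv_map_mstarHom_sup_range_gammaHom M⟩
  · rintro ⟨m, hm, γ, w, hw, rfl⟩
    exact mul_mem (mul_mem (map_mstarHom_normalizer_le ⟨m, hM_le hm, rfl⟩)
      (range_gammaHom_le_normalizer ⟨γ, rfl⟩)) (le_normalizer hw)
  · obtain ⟨hmH, rfl⟩ := mem_and_eq_one_of_mstarHom_mul_gammaHom_mem_wreath hmγ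
    have hm1 : m = 1 := mem_bot.mp (hMH ▸ ⟨hm, hmH⟩)
    rw [hm1, map_one, map_one, one_mul]
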